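/- arXiv:2401.00630 — 9 statements merged into one kernel-verified Lean document; each statement's English description precedes it below -/
import Mathlib

section
/- Let p be a prime with p > 2 and let z ∈ ZMod p. Then there exist x, y ∈ ZMod p such that x² + y² + z² = x*y*z if and only if either (z ≠ 2 and z ≠ -2) or -1 is a square in ZMod p. -/
/-!
Completing the square in `x` gives
`4 (x² + y² + z² - x y z) = (2x - y z)² + (4 - z²) y² + 4 z²`.
When `z² ≠ 4` the binary form `u² + (4 - z²) v²` is nondegenerate, and over a finite field of odd
characteristic such a form represents every element, in particular `-4 z²`. When `z² = 4` the
equation reads `(2x - y z)² = -16`, which is solvable exactly when `-1` is a square. Conversely, if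
`i² = -1` then `(i z, 0, z)` is always a solution.
-/

open Polynomial

variable {F : Type*} [Field F]

theorem FiniteField.exists_sq_add_mul_sq_eq [Fintype F] (hF : ringChar F ≠ 2) {c : F}
    (hc : c ≠ 0) (d : F) : ∃ u v : F, u ^ 2 + c * v ^ 2 = d := by
  obtain ⟨u, v, h⟩ := FiniteField.exists_root_sum_quadratic (f := X ^ 2 - C d) (g := C c * X ^ 2)
    (degree_X_pow_sub_C two_pos d) (by rw [degree_C_mul_X_pow 2 hc]; rfl)
    (FiniteField.odd_card_of_char_ne_two hF)
  refine ⟨u, v, ?_⟩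
  simp only [eval_sub, eval_mul, eval_pow, eval_X, eval_C] at h
  linear_combination h

theorem exists_markoff_of_isSquare_neg_one {R : Type*} [CommRing R] (h : IsSquare (-1 : R))
    (z : R) : ∃ x y : R, x ^ 2 + y ^ 2 + z ^ 2 = x * y * z := by
  obtain ⟨i, hi⟩ := h
  exact ⟨i * z, 0, by linear_combination (-z ^ 2) * hi⟩

theorem isSquare_neg_one_of_markoff_of_sq_eq_four (h2 : (2 : F) ≠ 0) {x y z : F}
    (h : x ^ 2 + y ^ 2 + z ^ 2 = x * y * z) (hz : z ^ 2 = 4) : IsSquare (-1 : F) := by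
  have h4 : (4 : F) ≠ 0 := by
    rw [show (4 : F) = 2 * 2 by norm_num]; exact mul_ne_zero h2 h2
  exact ⟨(2 * x - y * z) / 4, by field_simp; linear_combination (-4) * h - (y ^ 2 - 4) * hz⟩

theorem FiniteField.exists_markoff_of_sq_ne_four [Fintype F] (hF : ringChar F ≠ 2) {z : F}
    (hz : z ^ 2 ≠ 4) : ∃ x y : F, x ^ 2 + y ^ 2 + z ^ 2 = x * y * z := by
  obtain ⟨u, y, h⟩ := exists_sq_add_mul_sq_eq hF (sub_ne_zero.mpr hz.symm) (-4 * z ^ 2)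
  have h2 : (2 : F) ≠ 0 := Ring.two_ne_zero hF
  exact ⟨(u + y * z) / 2, y, by field_simp; linear_combination h⟩

theorem FiniteField.exists_markoff_iff [Fintype F] (hF : ringChar F ≠ 2) (z : F) :
    (∃ x y : F, x ^ 2 + y ^ 2 + z ^ 2 = x * y * z) ↔ z ^ 2 ≠ 4 ∨ IsSquare (-1 : F) := by
  refine ⟨fun ⟨x, y, h⟩ => ?_, ?_⟩
  · exact or_iff_not_imp_left.mpr fun hz =>
      isSquare_neg_one_of_markoff_of_sq_eq_four (Ring.two_ne_zero hF) h (not_not.mp hz)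
  · rintro (hz | h)
    · exact exists_markoff_of_sq_ne_four hF hz
    · exact exists_markoff_of_isSquare_neg_one h z

theorem sq_ne_four_iff {R : Type*} [CommRing R] [NoZeroDivisors R] {z : R} :
    z ^ 2 ≠ 4 ↔ z ≠ 2 ∧ z ≠ -2 := by
  rw [show (4 : R) = 2 ^ 2 by norm_num, Ne, sq_eq_sq_iff_eq_or_eq_neg, not_or]

theorem markoff_coord_exists (p : ℕ) [Fact p.Prime] (hp : 2 < p) (z : ZMod p) :
    (∃ x y : ZMod p, x ^ 2 + y ^ 2 + z ^ 2 = x * y * z) ↔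
      ((z ≠ 2 ∧ z ≠ -2) ∨ IsSquare (-1 : ZMod p)) := by
  have hchar : ringChar (ZMod p) ≠ 2 := by rw [ZMod.ringChar_zmod_n]; omega
  rw [FiniteField.exists_markoff_iff hchar, sq_ne_four_iff]
end

section
/- Let p be a prime with p > 2. Let G_p^× be the graph whose vertex set is the set of nonzero triples (a,b,c) ∈ (ZMod p)³ with a² + b² + c² = a*b*c, with an edge joining v and V_i(v) for each of the three Vieta involutions V_i. Let G^× be the graph whose vertex set is the set of nonzero triples (a,b,c) of nonnegative integers with a² + b² + c² = a*b*c, with edges likewise given by the V_i. Assume (Markoff's theorem) that G^× is connected. Then G_p^× is connected if and only if every triple (a,b,c) ∈ (ZMod p)³ with a² + b² + c² = a*b*c is the componentwise reduction modulo p of a nonnegative integer triple (A,B,C) with A² + B² + C² = A*B*C. -/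
/-!
Reduction modulo `p` sends Vieta moves between integer triples to Vieta moves between their
reductions. If every mod-`p` solution lifts, a path in the connected integer graph between
lifts of two vertices therefore reduces to a path between the vertices. Conversely, a path
in the mod-`p` graph starting at the reduction of `(3, 3, 3)` lifts step by step, because a
Vieta move keeps a positive integer solution positive; the reduction of `(3, 3, 3)` is a
vertex unless `3 = 0` in `ZMod p`, and then `(0, 0, 0)` is the only solution.
-/

/-- The Markoff equation `a² + b² + c² = a·b·c` for a triple over a commutative ring. -/
def IsMarkoff {R : Type*} [CommRing R] (v : R × R × R) : Prop :=
  v.1 ^ 2 + v.2.1 ^ 2 + v.2.2 ^ 2 = v.1 * v.2.1 * v.2.2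

/-- The three Markoff Vieta involutions. -/
def vieta {R : Type*} [CommRing R] : Fin 3 → R × R × R → R × R × R
  | 0 => fun v => (v.2.1 * v.2.2 - v.1, v.2.1, v.2.2)
  | 1 => fun v => (v.1, v.1 * v.2.2 - v.2.1, v.2.2)
  | 2 => fun v => (v.1, v.2.1, v.1 * v.2.1 - v.2.2)

/-- The Markoff graph `𝒢ₚ^×` modulo `p`: vertices are the nonzero solutions of the Markoff
equation over `ZMod p`, with an edge joining `v` and `Vᵢ v` for each Vieta involution. -/
def markoffGraphMod (p : ℕ) :
    SimpleGraph {v : ZMod p × ZMod p × ZMod p // IsMarkoff v ∧ v ≠ 0} where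
  Adj v w := v ≠ w ∧ ∃ i : Fin 3, w.val = vieta i v.val ∨ v.val = vieta i w.val
  symm := ⟨fun v w ⟨h, i, hi⟩ => ⟨h.symm, i, hi.symm⟩⟩
  loopless := ⟨fun v h => h.1 rfl⟩

/-- The Markoff graph `𝒢^×` over the nonnegative integers: vertices are the nonzero
nonnegative integer solutions of the Markoff equation, with edges given by the Vieta
involutions. -/
def markoffGraphInt :
    SimpleGraph {v : ℤ × ℤ × ℤ // IsMarkoff v ∧ v ≠ 0 ∧ 0 ≤ v.1 ∧ 0 ≤ v.2.1 ∧ 0 ≤ v.2.2} where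
  Adj v w := v ≠ w ∧ ∃ i : Fin 3, w.val = vieta i v.val ∨ v.val = vieta i w.val
  symm := ⟨fun v w ⟨h, i, hi⟩ => ⟨h.symm, i, hi.symm⟩⟩
  loopless := ⟨fun v h => h.1 rfl⟩

open Relation

variable {R S : Type*} [CommRing R] [CommRing S]

theorem vieta_involutive (i : Fin 3) : Function.Involutive (vieta (R := R) i) := by
  rintro ⟨a, b, c⟩
  fin_cases i <;> simp [vieta]

theorem vieta_eq_zero_iff {i : Fin 3} {v : R × R × R} : vieta i v = 0 ↔ v = 0 := by
  have hzero : vieta i (0 : R × R × R) = 0 := by fin_cases i <;> simp [vieta]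
  exact (vieta_involutive i).injective.eq_iff' hzero

theorem IsMarkoff.vieta {v : R × R × R} (h : IsMarkoff v) (i : Fin 3) :
    IsMarkoff (vieta i v) := by
  obtain ⟨a, b, c⟩ := v
  unfold IsMarkoff at h ⊢
  fin_cases i <;> simp only [_root_.vieta] <;> linear_combination h

def mapTriple (f : R →+* S) (v : R × R × R) : S × S × S :=
  (f v.1, f v.2.1, f v.2.2)

theorem mapTriple_vieta (f : R →+* S) (i : Fin 3) (v : R × R × R) :
    mapTriple f (vieta i v) = vieta i (mapTriple f v) := by
  fin_cases i <;> simp [vieta, mapTriple]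

theorem IsMarkoff.mapTriple (f : R →+* S) {v : R × R × R} (h : IsMarkoff v) :
    IsMarkoff (mapTriple f v) := by
  unfold IsMarkoff at h ⊢
  simpa [_root_.mapTriple] using congrArg f h

def VietaMove (v w : R × R × R) : Prop :=
  ∃ i : Fin 3, w = vieta i v

theorem vietaMove_iff {v w : R × R × R} :
    VietaMove v w ↔ ∃ i : Fin 3, w = vieta i v ∨ v = vieta i w := by
  refine ⟨fun ⟨i, h⟩ => ⟨i, .inl h⟩, fun ⟨i, h⟩ => ⟨i, ?_⟩⟩
  rcases h with h | rfl
  · exact h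
  · exact (vieta_involutive i w).symm

theorem reflTransGen_vietaMove_mapTriple (f : R →+* S) {v w : R × R × R}
    (h : ReflTransGen VietaMove v w) : ReflTransGen VietaMove (mapTriple f v) (mapTriple f w) :=
  h.lift _ fun _ _ ⟨i, hi⟩ => ⟨i, hi ▸ mapTriple_vieta f i _⟩

def IsPosMarkoff (v : ℤ × ℤ × ℤ) : Prop :=
  IsMarkoff v ∧ 0 < v.1 ∧ 0 < v.2.1 ∧ 0 < v.2.2

theorem IsPosMarkoff.vieta {v : ℤ × ℤ × ℤ} (h : IsPosMarkoff v) (i : Fin 3) :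
    IsPosMarkoff (vieta i v) := by
  obtain ⟨a, b, c⟩ := v
  obtain ⟨hM, ha, hb, hc⟩ := h
  refine ⟨hM.vieta i, ?_⟩
  have hM' : a ^ 2 + b ^ 2 + c ^ 2 = a * b * c := hM
  have new_pos {x y z : ℤ} (hx : 0 < x) (hy : 0 < y) (h : x * (y * z - x) = y ^ 2 + z ^ 2) :
      0 < y * z - x :=
    pos_of_mul_pos_right (h ▸ by positivity) hx.le
  fin_cases i <;> simp only [_root_.vieta]
  · exact ⟨new_pos ha hb (by linear_combination -hM'), hb, hc⟩
  · exact ⟨ha, new_pos hb ha (by linear_combination -hM'), hc⟩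
  · exact ⟨ha, hb, new_pos hc ha (by linear_combination -hM')⟩

theorem exists_isPosMarkoff_mapTriple_eq (f : ℤ →+* R) {v : ℤ × ℤ × ℤ} (hv : IsPosMarkoff v)
    {w : R × R × R} (h : ReflTransGen VietaMove (mapTriple f v) w) :
    ∃ v' : ℤ × ℤ × ℤ, IsPosMarkoff v' ∧ mapTriple f v' = w := by
  induction h with
  | refl => exact ⟨v, hv, rfl⟩
  | tail _ hstep ih =>
    obtain ⟨v', hv', rfl⟩ := ih
    obtain ⟨i, rfl⟩ := hstep
    exact ⟨vieta i v', hv'.vieta i, mapTriple_vieta f i v'⟩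

theorem eq_zero_of_isMarkoff_of_three_eq_zero {p : ℕ} (h3 : (3 : ZMod p) = 0)
    {v : ZMod p × ZMod p × ZMod p} (hv : IsMarkoff v) : v = 0 := by
  have hp : p ∣ 3 := (ZMod.natCast_eq_zero_iff 3 p).1 (by exact_mod_cast h3)
  rcases (Nat.dvd_prime Nat.prime_three).1 hp with rfl | rfl
  · exact Subsingleton.elim _ _
  · revert v
    unfold IsMarkoff
    decide

theorem reflTransGen_vietaMove_of_reachable {U V} (h : markoffGraphInt.Reachable U V) :
    ReflTransGen VietaMove U.val V.val :=
  ((SimpleGraph.reachable_iff_reflTransGen U V).1 h).lift _ fun _ _ hadj => vietaMove_iff.2 hadj.2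

theorem markoffGraphMod_reachable_iff {p : ℕ} {u v} :
    (markoffGraphMod p).Reachable u v ↔ ReflTransGen VietaMove u.val v.val := by
  refine ⟨fun h => ((SimpleGraph.reachable_iff_reflTransGen u v).1 h).lift _
    fun _ _ hadj => vietaMove_iff.2 hadj.2, fun h => ?_⟩
  suffices ∀ w, ReflTransGen VietaMove u.val w →
      ∃ hw : IsMarkoff w ∧ w ≠ 0, (markoffGraphMod p).Reachable u ⟨w, hw⟩ from
    (this v.val h).2
  intro w h
  induction h with
  | refl => exact ⟨u.prop, .refl _⟩
  | @tail w _ _ hstep ih =>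
    obtain ⟨hw, hreach⟩ := ih
    obtain ⟨i, rfl⟩ := hstep
    refine ⟨⟨hw.1.vieta i, vieta_eq_zero_iff.not.2 hw.2⟩, hreach.trans ?_⟩
    by_cases hfix : vieta i w = w
    · simp only [hfix]; rfl
    · exact SimpleGraph.Adj.reachable ⟨fun h => hfix (congrArg Subtype.val h).symm, i, .inl rfl⟩

theorem markoffGraphMod_connected_iff_lift_general (p : ℕ)
    (hconn : markoffGraphInt.Preconnected) :
    (markoffGraphMod p).Preconnected ↔
      ∀ v : ZMod p × ZMod p × ZMod p, IsMarkoff v →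
        ∃ w : ℤ × ℤ × ℤ, IsMarkoff w ∧ 0 ≤ w.1 ∧ 0 ≤ w.2.1 ∧ 0 ≤ w.2.2 ∧
          ((w.1 : ZMod p), (w.2.1 : ZMod p), (w.2.2 : ZMod p)) = v := by
  let f := Int.castRingHom (ZMod p)
  constructor
  · intro hmod v hv
    by_cases hv0 : v = 0
    · exact ⟨0, by simp [IsMarkoff], le_rfl, le_rfl, le_rfl, by simp [hv0]⟩
    have h3 : (3 : ZMod p) ≠ 0 := fun h3 => hv0 (eq_zero_of_isMarkoff_of_three_eq_zero h3 hv)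
    have hbase : IsPosMarkoff (3, 3, 3) := by norm_num [IsPosMarkoff, IsMarkoff]
    have hbase0 : mapTriple f (3, 3, 3) ≠ 0 := by simp [mapTriple, f, h3]
    obtain ⟨w, ⟨hw, h1, h2, h3⟩, hwv⟩ := exists_isPosMarkoff_mapTriple_eq f hbase
      (markoffGraphMod_reachable_iff.1 (hmod ⟨_, hbase.1.mapTriple f, hbase0⟩ ⟨v, hv, hv0⟩))
    exact ⟨w, hw, h1.le, h2.le, h3.le, hwv⟩
  · intro hlift u v
    have lift_vertex (u : {v : ZMod p × ZMod p × ZMod p // IsMarkoff v ∧ v ≠ 0}) :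
        ∃ U : {v : ℤ × ℤ × ℤ // IsMarkoff v ∧ v ≠ 0 ∧ 0 ≤ v.1 ∧ 0 ≤ v.2.1 ∧ 0 ≤ v.2.2},
          mapTriple f U.val = u.val := by
      obtain ⟨U, hU, h1, h2, h3, hUu⟩ := hlift u.val u.prop.1
      refine ⟨⟨U, hU, ?_, h1, h2, h3⟩, hUu⟩
      rintro rfl
      exact u.prop.2 (by simp [← hUu])
    obtain ⟨U, hUu⟩ := lift_vertex u
    obtain ⟨V, hVv⟩ := lift_vertex v
    rw [markoffGraphMod_reachable_iff, ← hUu, ← hVv]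
    exact reflTransGen_vietaMove_mapTriple f (reflTransGen_vietaMove_of_reachable (hconn U V))

theorem markoffGraphMod_connected_iff_lift (p : ℕ) [Fact p.Prime] (hp : 2 < p)
    (hconn : markoffGraphInt.Preconnected) :
    (markoffGraphMod p).Preconnected ↔
      ∀ v : ZMod p × ZMod p × ZMod p, IsMarkoff v →
        ∃ w : ℤ × ℤ × ℤ, IsMarkoff w ∧ 0 ≤ w.1 ∧ 0 ≤ w.2.1 ∧ 0 ≤ w.2.2 ∧
          ((w.1 : ZMod p), (w.2.1 : ZMod p), (w.2.2 : ZMod p)) = v :=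
  markoffGraphMod_connected_iff_lift_general p hconn
end

section
/- Let p be a prime with p > 2 and let F be a finite field of cardinality p², equipped with its ZMod p-algebra structure, with algebra map ι : ZMod p → F. For every nonzero χ ∈ F, the element χ + χ⁻¹ lies in the range of ι if and only if the multiplicative order of χ divides p - 1 or divides p + 1. -/
open Polynomial

lemma mem_range_iff_pow_card_eq (p : ℕ) [Fact p.Prime]
    (F : Type*) [Field F] (y : F) [Algebra (ZMod p) F] :
    y ∈ Set.range (algebraMap (ZMod p) F) ↔ y ^ p = y := by
  classical
  have hp1 : 1 < p := (Fact.out : p.Prime).one_lt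
  have hi : Function.Injective (algebraMap (ZMod p) F) :=
    (algebraMap (ZMod p) F).injective
  constructor
  · rintro ⟨x, rfl⟩
    rw [← map_pow, ZMod.pow_card]
  · intro hy
    set P : F[X] := X ^ p - X with hPdef
    have hdeg : P.natDegree = p := by
      rw [hPdef]
      compute_degree!
      · rw [if_neg (by omega)]; simp
      · omega
    have hPne : P ≠ 0 := by
      intro h
      rw [h] at hdeg
      simp at hdeg
      omega
    set S : Finset F := Finset.univ.image (algebraMap (ZMod p) F) with hS
    have hScard : S.card = p := by
      rw [hS, Finset.card_image_of_injective _ hi, Finset.card_univ, ZMod.card]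
    have hsub : S ⊆ P.roots.toFinset := by
      intro y hy
      rw [hS, Finset.mem_image] at hy
      obtain ⟨x, -, rfl⟩ := hy
      rw [Multiset.mem_toFinset, mem_roots hPne]
      simp [hPdef, ← map_pow, ZMod.pow_card]
    have hcard : P.roots.toFinset.card ≤ p := by
      calc P.roots.toFinset.card ≤ Multiset.card P.roots := P.roots.toFinset_card_le
        _ ≤ P.natDegree := P.card_roots'
        _ = p := hdeg
    have heq : S = P.roots.toFinset :=
      Finset.eq_of_subset_of_card_le hsub (by rw [hScard]; exact hcard)
    have : y ∈ P.roots.toFinset := by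
      rw [Multiset.mem_toFinset, mem_roots hPne]
      simp [hPdef, hy]
    rw [← heq, hS, Finset.mem_image] at this
    obtain ⟨x, -, rfl⟩ := this
    exact ⟨x, rfl⟩

theorem add_inv_mem_range_iff_orderOf_dvd (p : ℕ) [Fact p.Prime] (hp : 2 < p)
    (F : Type*) [Field F] [Fintype F] [Algebra (ZMod p) F] (hF : Fintype.card F = p ^ 2)
    (χ : F) (hχ : χ ≠ 0) :
    χ + χ⁻¹ ∈ Set.range (algebraMap (ZMod p) F) ↔
      orderOf χ ∣ p - 1 ∨ orderOf χ ∣ p + 1 := by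
  have hprime : p.Prime := Fact.out
  have hchar : CharP F p := charP_of_injective_algebraMap (algebraMap (ZMod p) F).injective p
  have hinv : χ⁻¹ ≠ 0 := inv_ne_zero hχ
  rw [mem_range_iff_pow_card_eq p F]
  have hfrob : (χ + χ⁻¹) ^ p = χ ^ p + χ⁻¹ ^ p := add_pow_char ..
  rw [hfrob]
  constructor
  · intro h
    have hne : χ ^ p ≠ 0 := pow_ne_zero _ hχ
    have key : (χ ^ p - χ) * (χ ^ p - χ⁻¹) = 0 := by
      have h' : χ ^ p + (χ ^ p)⁻¹ = χ + χ⁻¹ := by rw [← inv_pow]; exact h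
      have hid : (χ ^ p - χ) * (χ ^ p - χ⁻¹)
          = χ ^ p * ((χ ^ p + (χ ^ p)⁻¹) - (χ + χ⁻¹)) := by
        field_simp
        ring
      rw [hid, h', sub_self, mul_zero]
    rcases mul_eq_zero.mp key with h1 | h2
    · left
      rw [orderOf_dvd_iff_pow_eq_one]
      have hpe : χ ^ p = χ := sub_eq_zero.mp h1
      have h3 : χ ^ (p - 1) * χ = 1 * χ := by
        rw [one_mul, ← pow_succ, show p - 1 + 1 = p by omega, hpe]
      exact mul_right_cancel₀ hχ h3
    · right
      rw [orderOf_dvd_iff_pow_eq_one, pow_succ]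
      rw [sub_eq_zero.mp h2, inv_mul_cancel₀ hχ]
  · rintro (h | h)
    · have h1 : χ ^ (p - 1) = 1 := orderOf_dvd_iff_pow_eq_one.mp h
      have h2 : χ ^ p = χ := by
        rw [show p = p - 1 + 1 by omega, pow_succ, h1, one_mul]
      rw [h2, inv_pow, h2]
    · have h1 : χ ^ p * χ = 1 := by
        rw [← pow_succ]; exact orderOf_dvd_iff_pow_eq_one.mp h
      have h2 : χ ^ p = χ⁻¹ := eq_inv_of_mul_eq_one_left h1
      rw [h2, inv_pow, h2, inv_inv, add_comm]
end

section
/- Let p be a prime with p > 2 and let F be a finite field of cardinality p², equipped with its ZMod p-algebra structure, with algebra map ι : ZMod p → F. For every a ∈ ZMod p there exists a nonzero χ ∈ F with (χ^(p-1) = 1 or χ^(p+1) = 1) such that ι(a) = χ + χ⁻¹. -/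
/-!
Every quadratic over `𝔽_p` has a root in the quadratic extension `F`: either it already has one
in `𝔽_p`, or it is irreducible and `𝔽_p[X]/(f)` embeds into `F`. Take a root `χ` of
`X² - aX + 1`; its roots are `χ` and `χ⁻¹`, so `a = χ + χ⁻¹`. The Frobenius `χ ↦ χ ^ p` permutes
these roots, hence `χ ^ p = χ` or `χ ^ p = χ⁻¹`.
-/

open Polynomial Module

section

variable {K L : Type*} [Field K] [Field L] [Algebra K L] [Finite L] {f : K[X]}

theorem Irreducible.exists_aeval_eq_zero_of_natDegree_dvd_finrank (hf : Irreducible f)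
    (hdvd : f.natDegree ∣ finrank K L) : ∃ x : L, aeval x f = 0 := by
  have : Fact (Irreducible f) := ⟨hf⟩
  obtain ⟨φ⟩ := FiniteField.nonempty_algHom_of_finrank_dvd (K := AdjoinRoot f) (L := L)
    (finrank_quotient_span_eq_natDegree (f := f) ▸ hdvd)
  refine ⟨φ (AdjoinRoot.root f), ?_⟩
  rw [aeval_algHom_apply, AdjoinRoot.aeval_eq, AdjoinRoot.mk_self, map_zero]

theorem Polynomial.exists_aeval_eq_zero_of_natDegree_eq_two (hf : f.natDegree = 2)
    (hL : 2 ∣ finrank K L) : ∃ x : L, aeval x f = 0 := by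
  by_cases hroot : ∃ a : K, f.IsRoot a
  · obtain ⟨a, ha⟩ := hroot
    exact ⟨algebraMap K L a, by
      rw [aeval_algebraMap_apply, coe_aeval_eq_eval, ha.eq_zero, map_zero]⟩
  · push Not at hroot
    exact (irreducible_of_degree_le_three_of_not_isRoot (by simp [hf]) hroot)
      |>.exists_aeval_eq_zero_of_natDegree_dvd_finrank (hf ▸ hL)

end

theorem Polynomial.aeval_pow_card_eq_zero {K A : Type*} [Field K] [Fintype K] [CommSemiring A]
    [Algebra K A] {f : K[X]} {x : A} (hx : aeval x f = 0) :
    aeval (x ^ Fintype.card K) f = 0 := by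
  rw [← expand_aeval, FiniteField.expand_card, map_pow, hx, zero_pow Fintype.card_ne_zero]

section

variable {L : Type*} [Field L] {b x y : L}

theorem add_inv_eq_of_sq_sub_mul_add_one_eq_zero (hx : x ^ 2 - b * x + 1 = 0) : x + x⁻¹ = b := by
  have hx0 : x ≠ 0 := by rintro rfl; simp at hx
  field_simp
  linear_combination hx

theorem eq_or_eq_inv_of_sq_sub_mul_add_one_eq_zero (hx : x ^ 2 - b * x + 1 = 0)
    (hy : y ^ 2 - b * y + 1 = 0) : y = x ∨ y = x⁻¹ := by
  have hx0 : x ≠ 0 := by rintro rfl; simp at hx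
  rw [← add_inv_eq_of_sq_sub_mul_add_one_eq_zero hx] at hy
  have : (y - x) * (y - x⁻¹) = 0 := by linear_combination hy + mul_inv_cancel₀ hx0
  simpa [sub_eq_zero] using this

end

theorem exists_chi_add_inv_eq_general (p : ℕ) [Fact p.Prime]
    (F : Type*) [Field F] [Fintype F] [Algebra (ZMod p) F] (hF : Fintype.card F = p ^ 2)
    (a : ZMod p) :
    ∃ χ : F, χ ≠ 0 ∧ (χ ^ (p - 1) = 1 ∨ χ ^ (p + 1) = 1) ∧
      algebraMap (ZMod p) F a = χ + χ⁻¹ := by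
  have hp : p.Prime := Fact.out
  have hfinrank : finrank (ZMod p) F = 2 :=
    Nat.pow_right_injective hp.two_le ((FiniteField.pow_finrank_eq_card p F).trans hF)
  let f : (ZMod p)[X] := X ^ 2 - C a * X + 1
  have hdeg : f.natDegree = 2 := by simp only [f]; compute_degree!
  have haeval (x : F) : aeval x f = x ^ 2 - algebraMap (ZMod p) F a * x + 1 := by
    simp [f]
  obtain ⟨χ, hχ⟩ := exists_aeval_eq_zero_of_natDegree_eq_two (L := F) hdeg (hfinrank ▸ dvd_rfl)
  have hχp := aeval_pow_card_eq_zero hχ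
  rw [ZMod.card, haeval] at hχp
  rw [haeval] at hχ
  have hχ0 : χ ≠ 0 := by rintro rfl; simp at hχ
  refine ⟨χ, hχ0, ?_, (add_inv_eq_of_sq_sub_mul_add_one_eq_zero hχ).symm⟩
  rcases eq_or_eq_inv_of_sq_sub_mul_add_one_eq_zero hχ hχp with h | h
  · left
    refine mul_right_cancel₀ hχ0 ?_
    rw [← pow_succ, Nat.sub_add_cancel hp.one_le, h, one_mul]
  · right
    rw [pow_succ, h, inv_mul_cancel₀ hχ0]

theorem exists_chi_add_inv_eq (p : ℕ) [Fact p.Prime] (hp : 2 < p)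
    (F : Type*) [Field F] [Fintype F] [Algebra (ZMod p) F] (hF : Fintype.card F = p ^ 2)
    (a : ZMod p) :
    ∃ χ : F, χ ≠ 0 ∧ (χ ^ (p - 1) = 1 ∨ χ ^ (p + 1) = 1) ∧
      algebraMap (ZMod p) F a = χ + χ⁻¹ :=
  exists_chi_add_inv_eq_general p F hF a
end

section
/- Let p be a prime with p > 2 and let F be a finite field of cardinality p², equipped with its ZMod p-algebra structure, with algebra map ι : ZMod p → F. Let r ∈ F be nonzero with r^(2*(p+1)) = 1 and r^(p+1) ≠ 1. Then (r + r⁻¹)^p = -(r + r⁻¹), and consequently (r + r⁻¹)² lies in the range of ι. -/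
open Polynomial in
lemma aux_mem_range_of_pow_card (p : ℕ) [Fact p.Prime]
    (F : Type*) [Field F] [Algebra (ZMod p) F] (x : F) (hx : x ^ p = x) :
    x ∈ Set.range (algebraMap (ZMod p) F) := by
  classical
  have hinj : Function.Injective (algebraMap (ZMod p) F) :=
    (algebraMap (ZMod p) F).injective
  have hp1 : 1 < p := (Fact.out : p.Prime).one_lt
  have hfne : (X ^ p - X : F[X]) ≠ 0 := FiniteField.X_pow_card_sub_X_ne_zero F hp1
  set f : F[X] := X ^ p - X with hf
  have hroot : ∀ y : F, y ^ p = y → y ∈ f.roots := by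
    intro y hy
    rw [mem_roots hfne, IsRoot.def]
    simp [hf, hy]
  -- the image of ZMod p is contained in the roots
  have T : Finset F := ∅
  set S : Finset F := Finset.univ.image (algebraMap (ZMod p) F) with hS
  have hScard : S.card = p := by
    rw [hS, Finset.card_image_of_injective _ hinj, Finset.card_univ, ZMod.card]
  have hSsub : S ⊆ f.roots.toFinset := by
    intro y hy
    rw [hS, Finset.mem_image] at hy
    obtain ⟨z, _, rfl⟩ := hy
    rw [Multiset.mem_toFinset]
    apply hroot
    rw [← map_pow, ZMod.pow_card]
  have hcard : f.roots.toFinset.card ≤ p := by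
    calc f.roots.toFinset.card ≤ Multiset.card f.roots := f.roots.toFinset_card_le
      _ ≤ f.natDegree := f.card_roots' 
      _ = p := FiniteField.X_pow_card_sub_X_natDegree_eq F hp1
  have heq : S = f.roots.toFinset :=
    Finset.eq_of_subset_of_card_le hSsub (hcard.trans_eq hScard.symm)
  have hx' : x ∈ f.roots.toFinset := Multiset.mem_toFinset.mpr (hroot x hx)
  rw [← heq, hS, Finset.mem_image] at hx'
  obtain ⟨z, _, rfl⟩ := hx'
  exact ⟨z, rfl⟩

theorem twisted_add_inv_pow_p (p : ℕ) [Fact p.Prime] (hp : 2 < p)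
    (F : Type*) [Field F] [Fintype F] [Algebra (ZMod p) F] (hF : Fintype.card F = p ^ 2)
    (r : F) (hr0 : r ≠ 0) (hr : r ^ (2 * (p + 1)) = 1) (hr' : r ^ (p + 1) ≠ 1) :
    (r + r⁻¹) ^ p = -(r + r⁻¹) ∧
      (r + r⁻¹) ^ 2 ∈ Set.range (algebraMap (ZMod p) F) := by
  haveI : CharP F p := charP_of_injective_algebraMap (algebraMap (ZMod p) F).injective p
  have hneg : r ^ (p + 1) = -1 := by
    have h2 : (r ^ (p + 1)) * (r ^ (p + 1)) = 1 := by
      rw [← pow_add]; rw [mul_comm 2 (p+1), pow_mul] at hr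
      rw [← hr]; ring
    rcases mul_self_eq_one_iff.mp h2 with h | h
    · exact absurd h hr'
    · exact h
  have hrp : r ^ p = -r⁻¹ := by
    have : r ^ p * r = -1 := by rw [← pow_succ]; exact hneg
    field_simp at this ⊢
    linear_combination this
  have h1 : (r + r⁻¹) ^ p = -(r + r⁻¹) := by
    rw [add_pow_char, hrp, inv_pow, hrp, neg_inv, inv_inv]
    ring
  refine ⟨h1, aux_mem_range_of_pow_card p F _ ?_⟩
  rw [← pow_mul, mul_comm 2 p, pow_mul, h1]
  ring
end

section
/- Let p be a prime with p > 2 and let F be a finite field of cardinality p², equipped with its ZMod p-algebra structure, with algebra map ι : ZMod p → F. Let χ, r ∈ F be nonzero with χ^(p+1) = 1, χ ≠ 1, χ ≠ -1, r^(2*(p+1)) = 1 and r^(p+1) ≠ 1. Then χ + χ⁻¹ lies in the range of ι, and for every integer ℓ the element ((χ + χ⁻¹) * (χ - χ⁻¹)⁻¹) * (r*χ^ℓ + (r*χ^ℓ)⁻¹) lies in the range of ι. -/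
lemma mem_range_of_pow_card_eq {p : ℕ} [Fact p.Prime] {F : Type*} [Field F]
    [Algebra (ZMod p) F] {x : F} (hx : x ^ p = x) :
    x ∈ Set.range (algebraMap (ZMod p) F) := by
  classical
  have hp1 : 1 < p := (Fact.out : p.Prime).one_lt
  set f : Polynomial F := Polynomial.X ^ p - Polynomial.X with hf
  have hf0 : f ≠ 0 := FiniteField.X_pow_card_sub_X_ne_zero F hp1
  have hroot : ∀ y : F, y ^ p = y → y ∈ f.roots := by
    intro y hy
    rw [Polynomial.mem_roots hf0]
    simp [hf, Polynomial.IsRoot, sub_eq_zero, hy]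
  by_contra hnot
  have hinj : Function.Injective (algebraMap (ZMod p) F) := (algebraMap (ZMod p) F).injective
  set T : Finset F := (Finset.univ : Finset (ZMod p)).image (algebraMap (ZMod p) F) with hT
  have hsub : insert x T ⊆ f.roots.toFinset := by
    intro y hy
    rw [Multiset.mem_toFinset]
    rcases Finset.mem_insert.mp hy with rfl | hy
    · exact hroot _ hx
    · obtain ⟨a, _, rfl⟩ := Finset.mem_image.mp hy
      apply hroot
      rw [← map_pow, ZMod.pow_card]
  have hxT : x ∉ T := by
    intro hmem
    obtain ⟨a, _, rfl⟩ := Finset.mem_image.mp hmem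
    exact hnot ⟨a, rfl⟩
  have hcard1 : (insert x T).card = p + 1 := by
    rw [Finset.card_insert_of_notMem hxT, hT, Finset.card_image_of_injective _ hinj,
      Finset.card_univ, ZMod.card]
  have hle : f.roots.toFinset.card ≤ p := by
    refine le_trans (Multiset.toFinset_card_le _) ?_
    refine le_trans (Polynomial.card_roots' f) ?_
    rw [hf, FiniteField.X_pow_card_sub_X_natDegree_eq F hp1]
  have := Finset.card_le_card hsub
  omega

theorem elliptic_orbit_coords_mem_range (p : ℕ) [Fact p.Prime] (hp : 2 < p)
    (F : Type*) [Field F] [Fintype F] [Algebra (ZMod p) F] (hF : Fintype.card F = p ^ 2)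
    (χ r : F) (hχ0 : χ ≠ 0) (hr0 : r ≠ 0)
    (hχ : χ ^ (p + 1) = 1) (h1 : χ ≠ 1) (hm1 : χ ≠ -1)
    (hr : r ^ (2 * (p + 1)) = 1) (hr' : r ^ (p + 1) ≠ 1) :
    χ + χ⁻¹ ∈ Set.range (algebraMap (ZMod p) F) ∧
      ∀ ℓ : ℤ, ((χ + χ⁻¹) * (χ - χ⁻¹)⁻¹) * (r * χ ^ ℓ + (r * χ ^ ℓ)⁻¹) ∈
        Set.range (algebraMap (ZMod p) F) := by
  have hp' : p.Prime := Fact.out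
  have hchar : CharP F p :=
    charP_of_injective_algebraMap (algebraMap (ZMod p) F).injective p
  -- χ^p = χ⁻¹
  have hχp : χ ^ p = χ⁻¹ := by
    have : χ ^ p * χ = 1 := by rw [← pow_succ]; exact hχ
    field_simp at this ⊢
    linear_combination this
  have hχinvp : (χ⁻¹) ^ p = χ := by
    rw [inv_pow, hχp, inv_inv]
  -- A = χ + χ⁻¹ is fixed by Frobenius
  have hA : (χ + χ⁻¹) ^ p = χ + χ⁻¹ := by
    rw [add_pow_char, hχp, hχinvp, add_comm]
  refine ⟨mem_range_of_pow_card_eq hA, ?_⟩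
  -- r^(p+1) = -1
  have hrm1 : r ^ (p + 1) = -1 := by
    have h2 : r ^ (p + 1) * r ^ (p + 1) = 1 := by
      rw [← pow_add]; rw [show p + 1 + (p + 1) = 2 * (p + 1) by ring]; exact hr
    rcases mul_self_eq_one_iff.mp h2 with h | h
    · exact absurd h hr'
    · exact h
  have hrp : r ^ p = -r⁻¹ := by
    have : r ^ p * r = -1 := by rw [← pow_succ]; exact hrm1
    field_simp at this ⊢
    linear_combination this
  -- B = χ - χ⁻¹
  have hB : (χ - χ⁻¹) ^ p = -(χ - χ⁻¹) := by
    rw [sub_pow_char, hχp, hχinvp]; ring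
  intro ℓ
  set x : F := r * χ ^ ℓ with hx
  have hxp : x ^ p = -x⁻¹ := by
    have hzp : (χ ^ ℓ) ^ p = (χ ^ ℓ)⁻¹ := by
      rw [← zpow_natCast (χ ^ ℓ), ← zpow_mul, mul_comm, zpow_mul, zpow_natCast, hχp, inv_zpow]
    rw [hx, mul_pow, hrp, hzp, mul_inv]
    ring
  have hxinvp : (x⁻¹) ^ p = -x := by
    rw [inv_pow, hxp, inv_neg, inv_inv]
  have hC : (x + x⁻¹) ^ p = -(x + x⁻¹) := by
    rw [add_pow_char, hxp, hxinvp]; ring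
  apply mem_range_of_pow_card_eq
  rw [mul_pow, mul_pow, inv_pow, hA, hB, hC, inv_neg]
  ring
end

section
/- Let F be a field and let χ, s ∈ F be nonzero with χ² ≠ 1. Set a = χ + χ⁻¹, t = (χ + χ⁻¹) * (χ - χ⁻¹)⁻¹, b = t * (s + s⁻¹), and c = t * (s*χ + (s*χ)⁻¹). Then a² + b² + c² = a*b*c, i.e. the triple (a, b, c) satisfies the Markoff equation over F. -/
/-!
With `d = χ - χ⁻¹` we have `a² = d² + 4`, and Fricke's trace identity for the commuting matrices
`diag(χ, χ⁻¹)`, `diag(s, s⁻¹)` gives `B² + C² + a² = a B C + 4` for `B = s + s⁻¹`,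
`C = sχ + (sχ)⁻¹`. Hence `d² + B² + C² = a B C`, and multiplying by `t² = (a / d)²` turns this into
the Markoff equation for `(a, t B, t C)`.
-/

/-- Fricke's identity `tr² A + tr² B + tr² AB = tr A tr B tr AB + 2 + tr [A, B]` for
`A = diag(χ, χ⁻¹)` and `B = diag(s, s⁻¹)`, whose commutator is trivial. -/
theorem fricke_identity_diag {F : Type*} [Field F] {χ s : F} (hχ : χ ≠ 0) (hs : s ≠ 0) :
    (χ + χ⁻¹) ^ 2 + (s + s⁻¹) ^ 2 + (s * χ + (s * χ)⁻¹) ^ 2 =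
      (χ + χ⁻¹) * (s + s⁻¹) * (s * χ + (s * χ)⁻¹) + 4 := by
  field_simp
  ring

theorem add_inv_sq_eq_sub_inv_sq_add_four {F : Type*} [Field F] {χ : F} (hχ : χ ≠ 0) :
    (χ + χ⁻¹) ^ 2 = (χ - χ⁻¹) ^ 2 + 4 := by
  field_simp
  ring

theorem sub_inv_ne_zero_of_sq_ne_one {F : Type*} [Field F] {χ : F} (hχ : χ ≠ 0)
    (hχ1 : χ ^ 2 ≠ 1) : χ - χ⁻¹ ≠ 0 := by
  rw [sub_ne_zero, ne_eq, ← mul_eq_one_iff_eq_inv₀ hχ, ← sq]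
  exact hχ1

theorem markoff_of_sq_add_sq_add_sq_eq_mul {F : Type*} [Field F] {a d B C : F} (hd : d ≠ 0)
    (h : d ^ 2 + B ^ 2 + C ^ 2 = a * B * C) :
    a ^ 2 + (a * d⁻¹ * B) ^ 2 + (a * d⁻¹ * C) ^ 2 = a * (a * d⁻¹ * B) * (a * d⁻¹ * C) := by
  field_simp
  linear_combination a ^ 2 * h

theorem markoff_parameterization (F : Type*) [Field F] (χ s : F) (hχ0 : χ ≠ 0) (hs0 : s ≠ 0)
    (hχ1 : χ ^ 2 ≠ 1) :
    let a := χ + χ⁻¹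
    let t := (χ + χ⁻¹) * (χ - χ⁻¹)⁻¹
    let b := t * (s + s⁻¹)
    let c := t * (s * χ + (s * χ)⁻¹)
    a ^ 2 + b ^ 2 + c ^ 2 = a * b * c := by
  intro a t b c
  apply markoff_of_sq_add_sq_add_sq_eq_mul (sub_inv_ne_zero_of_sq_ne_one hχ0 hχ1)
  linear_combination fricke_identity_diag hχ0 hs0 - add_inv_sq_eq_sub_inv_sq_add_four hχ0
end

section
/- Let F be a field and let χ ∈ F be nonzero with χ² ≠ 1, and set M = !![0, 1; -1, χ + χ⁻¹], a 2×2 matrix over F. Then for every natural number n, M^n = 1 if and only if χ^n = 1. In particular, if χ has finite multiplicative order then the order of M in the monoid of 2×2 matrices equals orderOf χ. -/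
/-!
The vectors `(1, χ)` and `(1, χ⁻¹)` are eigenvectors of `!![0, 1; -1, χ + χ⁻¹]` with eigenvalues
`χ` and `χ⁻¹`, and they form a basis exactly when `χ ≠ χ⁻¹`, i.e. `χ ^ 2 ≠ 1`. So the matrix is
conjugate to `diagonal ![χ, χ⁻¹]`, whose `n`-th power is `1` iff `χ ^ n = 1`.
-/

open Matrix

theorem SemiconjBy.eq_one_iff_of_isUnit {M : Type*} [Monoid M] {a x y : M}
    (h : SemiconjBy a x y) (ha : IsUnit a) : x = 1 ↔ y = 1 := by
  constructor
  · rintro rfl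
    exact ha.mul_right_cancel (by rw [← h.eq, mul_one, one_mul])
  · rintro rfl
    exact ha.mul_left_cancel (by rw [h.eq, mul_one, one_mul])

theorem SemiconjBy.pow_eq_one_iff_of_isUnit {M : Type*} [Monoid M] {a x y : M}
    (h : SemiconjBy a x y) (ha : IsUnit a) (n : ℕ) : x ^ n = 1 ↔ y ^ n = 1 :=
  (h.pow_right n).eq_one_iff_of_isUnit ha

theorem Matrix.diagonal_pow_eq_one_iff {n α : Type*} [Fintype n] [DecidableEq n] [Semiring α]
    (d : n → α) (k : ℕ) : diagonal d ^ k = 1 ↔ ∀ i, d i ^ k = 1 := by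
  rw [diagonal_pow, diagonal_eq_one, funext_iff]
  rfl

theorem semiconjBy_eigenbasis_rotation {F : Type*} [Field F] {χ : F} (hχ : χ ≠ 0) :
    SemiconjBy !![1, 1; χ, χ⁻¹] (diagonal ![χ, χ⁻¹]) !![0, 1; -1, χ + χ⁻¹] := by
  unfold SemiconjBy
  ext i j
  fin_cases i <;> fin_cases j <;> simp [mul_apply, Fin.sum_univ_two] <;> field_simp <;> ring

theorem isUnit_eigenbasis_rotation {F : Type*} [Field F] {χ : F} (hχ0 : χ ≠ 0)
    (hχ1 : χ ^ 2 ≠ 1) : IsUnit !![(1 : F), 1; χ, χ⁻¹] := by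
  rw [isUnit_iff_isUnit_det, det_fin_two_of, isUnit_iff_ne_zero, one_mul, one_mul, sub_ne_zero]
  intro h
  exact hχ1 (by rw [sq]; nth_rw 1 [← h]; exact inv_mul_cancel₀ hχ0)

theorem rotation_matrix_pow_eq_one_iff (F : Type*) [Field F] (χ : F) (hχ0 : χ ≠ 0)
    (hχ1 : χ ^ 2 ≠ 1) :
    (∀ n : ℕ, (!![0, 1; -1, χ + χ⁻¹] : Matrix (Fin 2) (Fin 2) F) ^ n = 1 ↔ χ ^ n = 1) ∧
      (IsOfFinOrder χ →
        orderOf (!![0, 1; -1, χ + χ⁻¹] : Matrix (Fin 2) (Fin 2) F) = orderOf χ) := by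
  have pow_eq_one_iff (n : ℕ) : (!![0, 1; -1, χ + χ⁻¹] : Matrix (Fin 2) (Fin 2) F) ^ n = 1 ↔ χ ^ n = 1 := by
    rw [← (semiconjBy_eigenbasis_rotation hχ0).pow_eq_one_iff_of_isUnit
      (isUnit_eigenbasis_rotation hχ0 hχ1), diagonal_pow_eq_one_iff, Fin.forall_fin_two]
    simp [inv_pow]
  exact ⟨pow_eq_one_iff, fun _ => orderOf_eq_orderOf_iff.2 pow_eq_one_iff⟩
end

section
/- Let p be a prime with p > 2 and let z ∈ ZMod p with z² ≠ 4. Then there exists y ∈ ZMod p such that (z² - 4)*y² - 4*z² is a square in ZMod p. -/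
open Polynomial

theorem exists_discriminant_isSquare (p : ℕ) [Fact p.Prime] (hp : 2 < p)
    (z : ZMod p) (hz : z ^ 2 ≠ 4) :
    ∃ y : ZMod p, IsSquare ((z ^ 2 - 4) * y ^ 2 - 4 * z ^ 2) := by
  have hz' : z ^ 2 - 4 ≠ 0 := sub_ne_zero.mpr hz
  have hodd : Fintype.card (ZMod p) % 2 = 1 := by
    rw [ZMod.card]
    exact Nat.odd_iff.mp ((Fact.out : p.Prime).odd_of_ne_two (by omega))
  have hneg1 : (-1 : ZMod p) ≠ 0 := by
    simpa using (neg_ne_zero.mpr (one_ne_zero : (1 : ZMod p) ≠ 0))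
  let f : (ZMod p)[X] := C (z ^ 2 - 4) * X ^ 2 - C (4 * z ^ 2)
  let g : (ZMod p)[X] := C (-1) * X ^ 2
  have hf2 : f.degree = 2 := by
    unfold f
    compute_degree!
  have hg2 : g.degree = 2 := by
    unfold g
    compute_degree!
  obtain ⟨a, b, hab⟩ := FiniteField.exists_root_sum_quadratic hf2 hg2 hodd
  refine ⟨a, b, ?_⟩
  simp only [f, g, eval_add, eval_sub, eval_mul, eval_C, eval_pow, eval_X] at hab
  linear_combination hab
end
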